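/- Let G be a finite simple graph that is VD_k for an integer k ≥ 0. Then every independent set of G with at most k vertices is contained in an independent set of G with exactly k vertices (equivalently, the (k−1)-skeleton of the independence complex Ind(G) is pure (k−1)-dimensional). -/

import Mathlib

/-- The closed neighborhood `N•(v) = N(v) ∪ {v}` of a vertex, as a `Finset`. -/
def SimpleGraph.closedNbhdFinset {V : Type*} [Fintype V] [DecidableEq V] (G : SimpleGraph V)
    [DecidableRel G.Adj] (v : V) : Finset V :=
  insert v (G.neighborFinset v)

/-- `VD G s k` means that the induced subgraph of `G` on the vertex set `s` has the
graph property `VD_k`: every (induced sub)graph is `VD_0`; a graph with exactly `k`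
vertices and no edges is `VD_k`; and if there is a vertex `v` such that deleting `v`
yields a `VD_k` graph and deleting the closed neighborhood of `v` yields a `VD_{k-1}`
graph, then the graph is `VD_k`. -/
inductive SimpleGraph.VD {V : Type*} [Fintype V] [DecidableEq V] (G : SimpleGraph V)
    [DecidableRel G.Adj] : Finset V → ℕ → Prop
  | zero (s : Finset V) : SimpleGraph.VD G s 0
  | edgeless (s : Finset V) (k : ℕ) (hcard : s.card = k)
      (h : ∀ u ∈ s, ∀ w ∈ s, ¬ G.Adj u w) : SimpleGraph.VD G s k
  | step (s : Finset V) (k : ℕ) (v : V) (hv : v ∈ s)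
      (hdel : SimpleGraph.VD G (s.erase v) (k + 1))
      (hnbr : SimpleGraph.VD G (s \ G.closedNbhdFinset v) k) : SimpleGraph.VD G s (k + 1)


/-!
Induction on the derivation of `VD_k`. An edgeless graph on `k` vertices is itself the
required independent set. In the recursive case with pivot `v`: if `v ∉ s`, extend `s` inside
`G \ v`; if `v ∈ s`, then `s \ {v}` avoids `N•(v)`, so extend it to `k - 1` vertices inside
`G \ N•(v)` and add `v` back.
-/

open Finset

namespace SimpleGraph

variable {V : Type*} {G : SimpleGraph V}

theorem isIndepSet_coe_finset_iff {s : Finset V} :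
    G.IsIndepSet (s : Set V) ↔ ∀ u ∈ s, ∀ w ∈ s, ¬ G.Adj u w :=
  ⟨fun hs _ hu _ hw hadj => hs hu hw (G.ne_of_adj hadj) hadj,
    fun hs u hu w hw _ => hs u hu w hw⟩

variable [Fintype V] [DecidableEq V] [DecidableRel G.Adj]

@[simp]
theorem mem_closedNbhdFinset {u v : V} : u ∈ G.closedNbhdFinset v ↔ u = v ∨ G.Adj v u := by
  simp [closedNbhdFinset]

theorem IsIndepSet.erase_subset_sdiff_closedNbhdFinset {s A : Finset V}
    (hs : G.IsIndepSet (s : Set V)) (hsA : s ⊆ A) {v : V} (hv : v ∈ s) :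
    s.erase v ⊆ A \ G.closedNbhdFinset v := by
  intro u hu
  obtain ⟨huv, hus⟩ := mem_erase.1 hu
  simp only [mem_sdiff, mem_closedNbhdFinset, not_or]
  exact ⟨hsA hus, huv, hs hv hus huv.symm⟩

theorem IsIndepSet.insert_of_disjoint_closedNbhdFinset {t : Finset V}
    (ht : G.IsIndepSet (t : Set V)) {v : V} (hvt : Disjoint t (G.closedNbhdFinset v)) :
    G.IsIndepSet (insert v t : Finset V) := by
  have hnadj : ∀ u ∈ t, ¬ G.Adj v u := fun u hu hadj =>
    Finset.disjoint_left.1 hvt hu (mem_closedNbhdFinset.2 (.inr hadj))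
  rw [coe_insert]
  exact ht.insert fun u hu _ => ⟨hnadj u hu, fun hadj => hnadj u hu hadj.symm⟩

theorem VD.exists_isIndepSet_superset {A : Finset V} {k : ℕ} (h : G.VD A k) {s : Finset V}
    (hsA : s ⊆ A) (hs : G.IsIndepSet (s : Set V)) (hcard : #s ≤ k) :
    ∃ t : Finset V, s ⊆ t ∧ t ⊆ A ∧ G.IsIndepSet (t : Set V) ∧ #t = k := by
  induction h generalizing s with
  | zero A =>
    obtain rfl : s = ∅ := card_eq_zero.1 (Nat.le_zero.1 hcard)
    exact ⟨∅, subset_rfl, empty_subset A, by simp, rfl⟩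
  | edgeless A k hAcard hA =>
    exact ⟨A, hsA, subset_rfl, isIndepSet_coe_finset_iff.2 hA, hAcard⟩
  | step A k v hv _ _ ih_erase ih_sdiff =>
    by_cases hvs : v ∈ s
    · have hcard' : #(s.erase v) ≤ k := by
        rw [card_erase_of_mem hvs]
        omega
      obtain ⟨t, hst, htA, ht, htk⟩ :=
        ih_sdiff (hs.erase_subset_sdiff_closedNbhdFinset hsA hvs) (hs.mono (by simp)) hcard'
      have hdisj : Disjoint t (G.closedNbhdFinset v) :=
        Finset.disjoint_left.2 fun _ hu => (mem_sdiff.1 (htA hu)).2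
      have hvt : v ∉ t := fun hvt => Finset.disjoint_left.1 hdisj hvt (by simp)
      refine ⟨insert v t, subset_insert_iff.2 hst, insert_subset hv (htA.trans sdiff_subset),
        ht.insert_of_disjoint_closedNbhdFinset hdisj, ?_⟩
      rw [card_insert_of_notMem hvt, htk]
    · obtain ⟨t, hst, htA, ht, htk⟩ := ih_erase (subset_erase.2 ⟨hsA, hvs⟩) hs hcard
      exact ⟨t, hst, htA.trans (erase_subset v A), ht, htk⟩

end SimpleGraph

/-- If `G` is `VD_k`, then every independent set of `G` with at most `k` vertices extends
to an independent set with exactly `k` vertices (purity of the `(k-1)`-skeleton of the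
independence complex). -/
theorem independent_extends_of_vd {V : Type*} [Fintype V] [DecidableEq V] (G : SimpleGraph V)
    [DecidableRel G.Adj] (k : ℕ) (h : G.VD Finset.univ k)
    (s : Finset V) (hs : ∀ u ∈ s, ∀ w ∈ s, ¬ G.Adj u w) (hcard : s.card ≤ k) :
    ∃ t : Finset V, s ⊆ t ∧ (∀ u ∈ t, ∀ w ∈ t, ¬ G.Adj u w) ∧ t.card = k := by
  obtain ⟨t, hst, -, ht, htk⟩ :=
    h.exists_isIndepSet_superset (subset_univ s) (SimpleGraph.isIndepSet_coe_finset_iff.2 hs) hcard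
  exact ⟨t, hst, SimpleGraph.isIndepSet_coe_finset_iff.1 ht, htk⟩
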